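/- Fix ρ₀ > 0, set t̄ := πρ₀²/4, and define for t ∈ [0, t̄) the angle θ(t) := 2t/ρ₀², the radius ρ(t) := ρ₀ (1 − sin(2t/ρ₀²))^{1/2}, the shift z(t) := ∫₀ᵗ ρ(τ)⁻¹ sin(2τ/ρ₀²) dτ, and the family γ(t,u) := (ρ(t) cos u, ρ(t) sin u, z(t)). Then γ solves the framed curvature flow with angle function θ on [0,t̄), ρ(t) → 0 as t → t̄, and z(t) → +∞ as t → t̄ (the integral ∫₀^{t̄} ρ(τ)⁻¹ sin(2τ/ρ₀²) dτ diverges); i.e. the flow develops an infinite pinch singularity. -/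

import Mathlib

/-!
The circles `γ(t, ·)` stay round and horizontal, so `∂ₛ²γ = -ρ⁻¹ (cos u, sin u, 0)` and
`∂ₛγ × ∂ₛ²γ = ρ⁻¹ e₃`: the flow reduces to the ODEs `ρ' = -cos θ / ρ` and `z' = sin θ / ρ`.
The first one says `(ρ²)' = -(ρ₀² sin θ)'`, which the given `ρ` solves; it vanishes when `θ`
reaches `π/2`, i.e. at `t = t̄`. Near `t̄`, with `φ = π/2 - θ = 2(t̄ - t)/ρ₀²`, the single bound
`1 - sin θ = 1 - cos φ ≤ φ²/2` gives both `sin θ ≥ 1/2` and `ρ ≤ ρ₀ φ`, hence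
`z' ≥ ρ₀ / (4 (t̄ - t))`, and `z` diverges like `-log (t̄ - t)`.
-/

noncomputable section

open Real MeasureTheory
open scoped RealInnerProductSpace

/-- Euclidean 3-space. -/
abbrev E3 : Type := EuclideanSpace ℝ (Fin 3)

/-- The cross product in `ℝ³`. -/
def cross (a b : E3) : E3 :=
  WithLp.toLp 2 ![a 1 * b 2 - a 2 * b 1, a 2 * b 0 - a 0 * b 2, a 0 * b 1 - a 1 * b 0]

/-- Partial derivative in the first (time) variable, vector valued. -/
def pt (f : ℝ → ℝ → E3) (t u : ℝ) : E3 := deriv (fun t' => f t' u) t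

/-- Partial derivative in the second (space) variable, vector valued. -/
def pu (f : ℝ → ℝ → E3) (t u : ℝ) : E3 := deriv (fun u' => f t u') u

/-- Partial derivative in the first (time) variable, scalar valued. -/
def ptR (f : ℝ → ℝ → ℝ) (t u : ℝ) : ℝ := deriv (fun t' => f t' u) t

/-- Partial derivative in the second (space) variable, scalar valued. -/
def puR (f : ℝ → ℝ → ℝ) (t u : ℝ) : ℝ := deriv (fun u' => f t u') u

/-- The local rate of parametrization `g := ‖∂ᵤ γ‖`. -/
def pg (γ : ℝ → ℝ → E3) (t u : ℝ) : ℝ := ‖pu γ t u‖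

/-- Arclength derivative `∂ₛ := g⁻¹ ∂ᵤ` of a vector field along `γ`. -/
def ds (γ f : ℝ → ℝ → E3) (t u : ℝ) : E3 := (pg γ t u)⁻¹ • pu f t u

/-- Arclength derivative `∂ₛ := g⁻¹ ∂ᵤ` of a scalar field along `γ`. -/
def dsR (γ : ℝ → ℝ → E3) (f : ℝ → ℝ → ℝ) (t u : ℝ) : ℝ := (pg γ t u)⁻¹ * puR f t u

/-- The unit tangent `T := ∂ₛ γ`. -/
def tang (γ : ℝ → ℝ → E3) : ℝ → ℝ → E3 := ds γ γ

/-- The curvature `κ := ‖∂ₛ² γ‖`. -/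
def curv (γ : ℝ → ℝ → E3) (t u : ℝ) : ℝ := ‖ds γ (tang γ) t u‖

/-- The Frenet normal `N := κ⁻¹ ∂ₛ² γ`. -/
def fN (γ : ℝ → ℝ → E3) (t u : ℝ) : E3 := (curv γ t u)⁻¹ • ds γ (tang γ) t u

/-- The Frenet binormal `B := T × N`. -/
def fB (γ : ℝ → ℝ → E3) (t u : ℝ) : E3 := cross (tang γ t u) (fN γ t u)

/-- The torsion `τ := ⟨∂ₛ N, B⟩`. -/
def tors (γ : ℝ → ℝ → E3) (t u : ℝ) : ℝ := ⟪ds γ (fN γ) t u, fB γ t u⟫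

/-- The velocity `cos θ ∂ₛ²γ + sin θ (∂ₛγ × ∂ₛ²γ)` of the framed curvature flow. -/
def fcfVel (γ : ℝ → ℝ → E3) (θ : ℝ → ℝ → ℝ) (t u : ℝ) : E3 :=
  Real.cos (θ t u) • ds γ (tang γ) t u +
    Real.sin (θ t u) • cross (tang γ t u) (ds γ (tang γ) t u)

/-- The length `L(Γ_t) := ∫₀^{2π} g du`. -/
def len (γ : ℝ → ℝ → E3) (t : ℝ) : ℝ := ∫ u in (0:ℝ)..(2 * π), pg γ t u

open Filter Topology Set

lemma hasDerivAt_toLp_vec3 {f₀ f₁ f₂ : ℝ → ℝ} {a₀ a₁ a₂ x : ℝ}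
    (h₀ : HasDerivAt f₀ a₀ x) (h₁ : HasDerivAt f₁ a₁ x) (h₂ : HasDerivAt f₂ a₂ x) :
    HasDerivAt (fun y => (WithLp.toLp 2 ![f₀ y, f₁ y, f₂ y] : E3))
      (WithLp.toLp 2 ![a₀, a₁, a₂]) x := by
  have h : HasDerivAt (fun y => ![f₀ y, f₁ y, f₂ y]) ![a₀, a₁, a₂] x :=
    hasDerivAt_pi.2 fun i => by fin_cases i <;> simpa
  exact (PiLp.hasFDerivAt_toLp 2 _).comp_hasDerivAt x h

lemma cross_toLp_vec3 (a₀ a₁ a₂ b₀ b₁ b₂ : ℝ) :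
    cross (WithLp.toLp 2 ![a₀, a₁, a₂]) (WithLp.toLp 2 ![b₀, b₁, b₂])
      = WithLp.toLp 2 ![a₁ * b₂ - a₂ * b₁, a₂ * b₀ - a₀ * b₂, a₀ * b₁ - a₁ * b₀] :=
  rfl

lemma smul_toLp_vec3 (c a₀ a₁ a₂ : ℝ) :
    c • (WithLp.toLp 2 ![a₀, a₁, a₂] : E3) = WithLp.toLp 2 ![c * a₀, c * a₁, c * a₂] := by
  rw [← WithLp.toLp_smul, Matrix.smul_vec3]
  rfl

lemma toLp_vec3_add (a₀ a₁ a₂ b₀ b₁ b₂ : ℝ) :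
    (WithLp.toLp 2 ![a₀, a₁, a₂] : E3) + WithLp.toLp 2 ![b₀, b₁, b₂]
      = WithLp.toLp 2 ![a₀ + b₀, a₁ + b₁, a₂ + b₂] := by
  rw [← WithLp.toLp_add, Matrix.vec3_add]

def circleFamily (r h : ℝ → ℝ) (t u : ℝ) : E3 :=
  WithLp.toLp 2 ![r t * cos u, r t * sin u, h t]

namespace circleFamily

variable (r h : ℝ → ℝ) (t u : ℝ)

lemma pu_eq : pu (circleFamily r h) t u = WithLp.toLp 2 ![r t * -sin u, r t * cos u, 0] :=
  (hasDerivAt_toLp_vec3 ((hasDerivAt_cos u).const_mul (r t)) ((hasDerivAt_sin u).const_mul (r t))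
    (hasDerivAt_const u (h t))).deriv

lemma pg_eq : pg (circleFamily r h) t u = |r t| := by
  rw [pg, pu_eq, EuclideanSpace.norm_eq, ← sqrt_sq_eq_abs, Fin.sum_univ_three]
  congr 1
  simp only [Matrix.cons_val_zero, Matrix.cons_val_one, Matrix.cons_val_two, Matrix.tail_cons,
    Matrix.head_cons, norm_eq_abs, sq_abs]
  linear_combination (r t) ^ 2 * sin_sq_add_cos_sq u

variable {r t}

lemma tang_eq (hr : 0 < r t) : tang (circleFamily r h) t u = WithLp.toLp 2 ![-sin u, cos u, 0] := by
  rw [tang, ds, pg_eq, pu_eq, abs_of_pos hr, smul_toLp_vec3]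
  congr 1
  exact Matrix.vec3_eq (by field_simp) (by field_simp) (mul_zero _)

lemma ds_tang_eq (hr : 0 < r t) :
    ds (circleFamily r h) (tang (circleFamily r h)) t u
      = WithLp.toLp 2 ![-(cos u / r t), -(sin u / r t), 0] := by
  have hpu : pu (tang (circleFamily r h)) t u = WithLp.toLp 2 ![-cos u, -sin u, 0] := by
    rw [pu, funext fun u' => tang_eq h u' hr]
    exact (hasDerivAt_toLp_vec3 (hasDerivAt_sin u).neg (hasDerivAt_cos u)
      (hasDerivAt_const u 0)).deriv
  rw [ds, pg_eq, hpu, abs_of_pos hr, smul_toLp_vec3]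
  congr 1
  exact Matrix.vec3_eq (by ring) (by ring) (mul_zero _)

lemma fcfVel_eq (θ : ℝ → ℝ → ℝ) (hr : 0 < r t) :
    fcfVel (circleFamily r h) θ t u = WithLp.toLp 2
      ![-(cos (θ t u) / r t * cos u), -(cos (θ t u) / r t * sin u), sin (θ t u) / r t] := by
  rw [fcfVel, ds_tang_eq h u hr, tang_eq h u hr, cross_toLp_vec3, smul_toLp_vec3, smul_toLp_vec3,
    toLp_vec3_add]
  congr 1
  exact Matrix.vec3_eq (by ring) (by ring)
    (by linear_combination sin (θ t u) / r t * sin_sq_add_cos_sq u)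

lemma pt_eq {r' h' : ℝ} (hr : HasDerivAt r r' t) (hh : HasDerivAt h h' t) :
    pt (circleFamily r h) t u = WithLp.toLp 2 ![r' * cos u, r' * sin u, h'] :=
  (hasDerivAt_toLp_vec3 (hr.mul_const (cos u)) (hr.mul_const (sin u)) hh).deriv

theorem pt_eq_fcfVel (θ : ℝ → ℝ → ℝ) (hr : 0 < r t)
    (hr' : HasDerivAt r (-cos (θ t u) / r t) t) (hh' : HasDerivAt h ((r t)⁻¹ * sin (θ t u)) t) :
    pt (circleFamily r h) t u = fcfVel (circleFamily r h) θ t u := by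
  rw [pt_eq h u hr' hh', fcfVel_eq h u θ hr]
  congr 1
  exact Matrix.vec3_eq (by ring) (by ring) (by ring)

end circleFamily

theorem hasDerivAt_integral_of_continuousOn {E : Type*} [NormedAddCommGroup E] [NormedSpace ℝ E]
    [CompleteSpace E] {f : ℝ → E} {s : Set ℝ} {a t : ℝ} (hs : IsOpen s) (hf : ContinuousOn f s)
    (hat : uIcc a t ⊆ s) : HasDerivAt (fun x => ∫ τ in a..x, f τ) (f t) t :=
  have hts : t ∈ s := hat right_mem_uIcc
  intervalIntegral.integral_hasDerivAt_right ((hf.mono hat).intervalIntegrable)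
    (hf.stronglyMeasurableAtFilter hs t hts) (hf.continuousAt (hs.mem_nhds hts))

theorem tendsto_integral_atTop_of_div_sub_le {f : ℝ → ℝ} {x₀ a b c : ℝ} (hx₀a : x₀ ≤ a)
    (hab : a < b) (hc : 0 < c) (hf : ContinuousOn f (Ico x₀ b))
    (hle : ∀ τ ∈ Ico a b, c / (b - τ) ≤ f τ) :
    Tendsto (fun t => ∫ τ in x₀..t, f τ) (𝓝[<] b) atTop := by
  have hintegrable : ∀ {t₁ t₂}, x₀ ≤ t₁ → t₁ ≤ t₂ → t₂ < b → IntervalIntegrable f volume t₁ t₂ :=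
    fun h₁ h₁₂ h₂ => (hf.mono (by
      rw [uIcc_of_le h₁₂]; exact Icc_subset_Ico (by linarith) h₂)).intervalIntegrable
  have hlower : ∀ t ∈ Ioo a b,
      (∫ τ in x₀..a, f τ) + c * log ((b - a) / (b - t)) ≤ ∫ τ in x₀..t, f τ := by
    rintro t ⟨hat, htb⟩
    have hkernel : ∫ τ in a..t, c / (b - τ) = c * log ((b - a) / (b - t)) := by
      simp only [div_eq_mul_inv c, intervalIntegral.integral_const_mul,
        intervalIntegral.integral_comp_sub_left (fun x => x⁻¹) b]
      rw [integral_inv_of_pos (by linarith) (by linarith)]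
    rw [← intervalIntegral.integral_add_adjacent_intervals (hintegrable le_rfl hx₀a (by linarith))
      (hintegrable hx₀a hat.le htb), ← hkernel]
    gcongr
    refine intervalIntegral.integral_mono_on hat.le ?_ (hintegrable hx₀a hat.le htb) ?_
    · exact (continuousOn_const.div (continuousOn_const.sub continuousOn_id) fun τ hτ => by
        rw [uIcc_of_le hat.le] at hτ; exact (sub_pos.2 (hτ.2.trans_lt htb)).ne').intervalIntegrable
    · exact fun τ hτ => hle τ ⟨hτ.1, hτ.2.trans_lt htb⟩
  have hgap : Tendsto (fun t => b - t) (𝓝[<] b) (𝓝[>] 0) :=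
    tendsto_nhdsWithin_of_tendsto_nhds_of_eventually_within _
      (((continuous_sub_left b).tendsto' b 0 (sub_self b)).mono_left nhdsWithin_le_nhds)
      (eventually_nhdsWithin_of_forall fun _ ht => sub_pos.2 (mem_Iio.1 ht))
  have hdiv : Tendsto (fun t => (b - a) / (b - t)) (𝓝[<] b) atTop := by
    simpa only [div_eq_mul_inv, Function.comp_def] using
      (tendsto_inv_nhdsGT_zero.comp hgap).const_mul_atTop (sub_pos.2 hab)
  refine tendsto_atTop_mono' _ ?_ (tendsto_atTop_add_const_left _ (∫ τ in x₀..a, f τ)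
    ((tendsto_log_atTop.comp hdiv).const_mul_atTop hc))
  filter_upwards [Ioo_mem_nhdsLT hab] with t ht using hlower t ht

lemma one_sub_sin_le_sq (x : ℝ) : 1 - sin x ≤ (π / 2 - x) ^ 2 / 2 := by
  linarith [cos_pi_div_two_sub x ▸ one_sub_sq_div_two_le_cos (x := π / 2 - x)]

def pinchRadius (ρ₀ t : ℝ) : ℝ := ρ₀ * √(1 - sin (2 * t / ρ₀ ^ 2))

def pinchShiftRate (ρ₀ τ : ℝ) : ℝ := (pinchRadius ρ₀ τ)⁻¹ * sin (2 * τ / ρ₀ ^ 2)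

section Pinch

variable {ρ₀ t : ℝ}

lemma continuous_pinchRadius (ρ₀ : ℝ) : Continuous (pinchRadius ρ₀) := by
  unfold pinchRadius; fun_prop

lemma pinchRadius_pos (hρ₀ : 0 < ρ₀) (ht : sin (2 * t / ρ₀ ^ 2) < 1) : 0 < pinchRadius ρ₀ t :=
  mul_pos hρ₀ (sqrt_pos.2 (sub_pos.2 ht))

lemma pinchRadius_pi_mul_sq_div_four (hρ₀ : ρ₀ ≠ 0) : pinchRadius ρ₀ (π * ρ₀ ^ 2 / 4) = 0 := by
  rw [pinchRadius, show 2 * (π * ρ₀ ^ 2 / 4) / ρ₀ ^ 2 = π / 2 by field_simp; ring]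
  simp

lemma hasDerivAt_pinchRadius (ht : sin (2 * t / ρ₀ ^ 2) < 1) :
    HasDerivAt (pinchRadius ρ₀) (-cos (2 * t / ρ₀ ^ 2) / pinchRadius ρ₀ t) t := by
  have hθ : HasDerivAt (fun x => 1 - sin (2 * x / ρ₀ ^ 2))
      (-(cos (2 * t / ρ₀ ^ 2) * (2 / ρ₀ ^ 2))) t := by
    simpa using ((hasDerivAt_sin _).comp t
      (((hasDerivAt_id t).const_mul 2).div_const (ρ₀ ^ 2))).const_sub 1
  refine ((hθ.sqrt (sub_pos.2 ht).ne').const_mul ρ₀).congr_deriv ?_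
  rw [pinchRadius]
  field_simp

lemma sin_two_mul_div_sq_lt_one (hρ₀ : 0 < ρ₀) (ht : t ∈ Ico 0 (π * ρ₀ ^ 2 / 4)) :
    sin (2 * t / ρ₀ ^ 2) < 1 := by
  have hρ₀2 : 0 < ρ₀ ^ 2 := by positivity
  rw [← sin_pi_div_two]
  refine sin_lt_sin_of_lt_of_le_pi_div_two ?_ le_rfl ?_
  · linarith [pi_pos, div_nonneg (mul_nonneg zero_le_two ht.1) hρ₀2.le]
  · rw [div_lt_iff₀ hρ₀2]; linarith [ht.2]

lemma continuousOn_pinchShiftRate (hρ₀ : 0 < ρ₀) :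
    ContinuousOn (pinchShiftRate ρ₀) {τ | sin (2 * τ / ρ₀ ^ 2) < 1} :=
  ((continuous_pinchRadius ρ₀).continuousOn.inv₀ fun _ hτ => (pinchRadius_pos hρ₀ hτ).ne').mul
    (by fun_prop)

lemma div_sub_le_pinchShiftRate (hρ₀ : 0 < ρ₀) {τ : ℝ}
    (hτ : τ ∈ Ico (π * ρ₀ ^ 2 / 4 - ρ₀ ^ 2 / 2) (π * ρ₀ ^ 2 / 4)) :
    ρ₀ / 4 / (π * ρ₀ ^ 2 / 4 - τ) ≤ pinchShiftRate ρ₀ τ := by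
  have hφ : π / 2 - 2 * τ / ρ₀ ^ 2 = 2 * (π * ρ₀ ^ 2 / 4 - τ) / ρ₀ ^ 2 := by field_simp; ring
  have hsin := one_sub_sin_le_sq (2 * τ / ρ₀ ^ 2)
  set φ := π / 2 - 2 * τ / ρ₀ ^ 2
  have hφpos : 0 < φ := by rw [hφ]; have := sub_pos.2 hτ.2; positivity
  have hφ1 : φ ≤ 1 := by rw [hφ, div_le_one (by positivity)]; linarith [hτ.1]
  have hsin_half : 1 / 2 ≤ sin (2 * τ / ρ₀ ^ 2) := by nlinarith
  have hrpos : 0 < pinchRadius ρ₀ τ :=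
    pinchRadius_pos hρ₀ (sin_two_mul_div_sq_lt_one hρ₀ ⟨by nlinarith [pi_gt_three, hτ.1], hτ.2⟩)
  have hrle : pinchRadius ρ₀ τ ≤ ρ₀ * φ := by
    rw [pinchRadius]
    gcongr
    exact sqrt_le_iff.2 ⟨hφpos.le, by nlinarith⟩
  calc ρ₀ / 4 / (π * ρ₀ ^ 2 / 4 - τ) = 1 / 2 / (ρ₀ * φ) := by
        rw [hφ]; field_simp; ring
    _ ≤ sin (2 * τ / ρ₀ ^ 2) / pinchRadius ρ₀ τ := by gcongr
    _ = pinchShiftRate ρ₀ τ := div_eq_inv_mul _ _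

end Pinch

/-- Infinite pinch singularity: with `θ(t) = 2t/ρ₀²`,
`ρ(t) = ρ₀ (1 − sin(2t/ρ₀²))^{1/2}`, `z(t) = ∫₀ᵗ ρ(τ)⁻¹ sin(2τ/ρ₀²) dτ`, the
family `γ(t,u) = (ρ(t) cos u, ρ(t) sin u, z(t))` solves the framed curvature
flow on `[0, t̄)`, `t̄ = πρ₀²/4`, the radius tends to `0`, and the shift `z(t)`
diverges to `+∞` as `t → t̄`. -/
theorem framed_curvature_flow_infinite_pinch_singularity
    (ρ₀ : ℝ) (hρ₀ : 0 < ρ₀)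
    (tend : ℝ) (htend : tend = π * ρ₀ ^ 2 / 4)
    (ρ z : ℝ → ℝ)
    (hρ : ∀ t, ρ t = ρ₀ * Real.sqrt (1 - Real.sin (2 * t / ρ₀ ^ 2)))
    (hz : ∀ t, z t = ∫ τ in (0:ℝ)..t, (ρ τ)⁻¹ * Real.sin (2 * τ / ρ₀ ^ 2))
    (γ : ℝ → ℝ → E3)
    (hγ : ∀ t u, γ t u = ![ρ t * Real.cos u, ρ t * Real.sin u, z t]) :
    (∀ t ∈ Set.Ico (0:ℝ) tend, ∀ u,
        pt γ t u = fcfVel γ (fun t' _ => 2 * t' / ρ₀ ^ 2) t u) ∧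
    Filter.Tendsto ρ (nhdsWithin tend (Set.Iio tend)) (nhds 0) ∧
    Filter.Tendsto z (nhdsWithin tend (Set.Iio tend)) Filter.atTop := by
  obtain rfl : γ = circleFamily ρ z := funext₂ fun t u => WithLp.ofLp_injective 2 (hγ t u)
  obtain rfl : ρ = pinchRadius ρ₀ := funext hρ
  obtain rfl : z = fun t => ∫ τ in (0:ℝ)..t, pinchShiftRate ρ₀ τ := funext hz
  subst htend
  have hsin : Ico 0 (π * ρ₀ ^ 2 / 4) ⊆ {τ | sin (2 * τ / ρ₀ ^ 2) < 1} :=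
    fun t ht => sin_two_mul_div_sq_lt_one hρ₀ ht
  refine ⟨fun t ht u => ?_, ?_, ?_⟩
  · refine circleFamily.pt_eq_fcfVel _ u _ (pinchRadius_pos hρ₀ (hsin ht))
      (hasDerivAt_pinchRadius (hsin ht)) ?_
    refine hasDerivAt_integral_of_continuousOn (isOpen_lt (by fun_prop) continuous_const)
      (continuousOn_pinchShiftRate hρ₀) ?_
    rw [uIcc_of_le ht.1]
    exact (Icc_subset_Ico_right ht.2).trans hsin
  · exact ((continuous_pinchRadius ρ₀).tendsto' _ 0
      (pinchRadius_pi_mul_sq_div_four hρ₀.ne')).mono_left nhdsWithin_le_nhds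
  · exact tendsto_integral_atTop_of_div_sub_le (by nlinarith [pi_gt_three])
      (sub_lt_self _ (by positivity)) (by positivity) ((continuousOn_pinchShiftRate hρ₀).mono hsin)
      fun τ hτ => div_sub_le_pinchShiftRate hρ₀ hτ
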